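/- arXiv:1009.5290 — 2 statements merged into one kernel-verified Lean document; each statement's English description precedes it below -/
import Mathlib

section
/- Let G_A = (V_A, E_A) and G_B = (V_B, E_B) be finite directed graphs and let (x^k) be the neighbor matching iteration. Then for every k ≥ 0 and every pair of nodes i ∈ V_A, j ∈ V_B, it holds that x^{k+1}_{ij} ≤ x^k_{ij}; that is, each sequence (x^k_{ij})_{k≥0} is nonincreasing. -/
open Finset Filter Topology

/-- A matching of finite sets `A` and `B`: a set of pairs, each with first
component in `A` and second in `B`, such that no element of either set occurs
in more than one pair. -/
def IsMatching {α β : Type*} (A : Finset α) (B : Finset β) (M : Finset (α × β)) : Prop :=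
  (∀ p ∈ M, p.1 ∈ A ∧ p.2 ∈ B) ∧
  (∀ p ∈ M, ∀ q ∈ M, p.1 = q.1 → p = q) ∧
  (∀ p ∈ M, ∀ q ∈ M, p.2 = q.2 → p = q)

open Classical in
/-- The optimal matching weight `W(A,B,w)`: the maximum over all matchings `M`
of `A` and `B` of the total weight `∑ (a,b) ∈ M, w a b` (the empty matching is allowed). -/
noncomputable def optWeight {α β : Type*} (A : Finset α) (B : Finset β)
    (w : α → β → ℝ) : ℝ :=
  ((A ×ˢ B).powerset.filter fun M => IsMatching A B M).sup'
    ⟨∅, by simp [IsMatching]⟩ (fun M => ∑ p ∈ M, w p.1 p.2)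

open Classical in
/-- The in-neighbors of node `i` in the directed graph with nodes `V` and edges `E`. -/
noncomputable def inNbrs {α : Type*} (V : Finset α) (E : Finset (α × α)) (i : α) : Finset α :=
  V.filter fun p => (p, i) ∈ E

open Classical in
/-- The out-neighbors of node `i` in the directed graph with nodes `V` and edges `E`. -/
noncomputable def outNbrs {α : Type*} (V : Finset α) (E : Finset (α × α)) (i : α) : Finset α :=
  V.filter fun q => (i, q) ∈ E

/-- In-similarity of `i ∈ V_A` and `j ∈ V_B` computed from the similarity matrix `x`:
`W(In(i), In(j), x) / max(id(i), id(j))` when `max(id(i), id(j)) > 0`, and `1` otherwise. -/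
noncomputable def sIn {α β : Type*} (VA : Finset α) (EA : Finset (α × α))
    (VB : Finset β) (EB : Finset (β × β)) (x : α → β → ℝ) (i : α) (j : β) : ℝ :=
  if max (inNbrs VA EA i).card (inNbrs VB EB j).card = 0 then 1
  else optWeight (inNbrs VA EA i) (inNbrs VB EB j) x /
    (max (inNbrs VA EA i).card (inNbrs VB EB j).card : ℝ)

/-- Out-similarity of `i ∈ V_A` and `j ∈ V_B` computed from the similarity matrix `x`:
`W(Out(i), Out(j), x) / max(od(i), od(j))` when `max(od(i), od(j)) > 0`, and `1` otherwise. -/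
noncomputable def sOut {α β : Type*} (VA : Finset α) (EA : Finset (α × α))
    (VB : Finset β) (EB : Finset (β × β)) (x : α → β → ℝ) (i : α) (j : β) : ℝ :=
  if max (outNbrs VA EA i).card (outNbrs VB EB j).card = 0 then 1
  else optWeight (outNbrs VA EA i) (outNbrs VB EB j) x /
    (max (outNbrs VA EA i).card (outNbrs VB EB j).card : ℝ)

/-- The neighbor matching update operator: `F(x)_{ij} = (s_in(i,j;x) + s_out(i,j;x)) / 2`. -/
noncomputable def nmUpdate {α β : Type*} (VA : Finset α) (EA : Finset (α × α))
    (VB : Finset β) (EB : Finset (β × β)) (x : α → β → ℝ) : α → β → ℝ :=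
  fun i j => (sIn VA EA VB EB x i j + sOut VA EA VB EB x i j) / 2

/-- The neighbor matching iteration: `x⁰_{ij} = 1` and `x^{k+1} = F(x^k)`. -/
noncomputable def nmIter {α β : Type*} (VA : Finset α) (EA : Finset (α × α))
    (VB : Finset β) (EB : Finset (β × β)) : ℕ → α → β → ℝ
  | 0 => fun _ _ => 1
  | k + 1 => nmUpdate VA EA VB EB (nmIter VA EA VB EB k)

lemma optWeight_mono' {α β : Type*} (A : Finset α) (B : Finset β) (w w' : α → β → ℝ)
    (h : ∀ a ∈ A, ∀ b ∈ B, w a b ≤ w' a b) : optWeight A B w ≤ optWeight A B w' := by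
  classical
  unfold optWeight
  apply Finset.sup'_le
  intro M hM
  have h2 := Finset.le_sup' (fun M => ∑ p ∈ M, w' p.1 p.2) hM
  refine le_trans (Finset.sum_le_sum ?_) h2
  intro p hp
  simp only [Finset.mem_filter, Finset.mem_powerset] at hM
  exact h p.1 (hM.2.1 p hp).1 p.2 (hM.2.1 p hp).2

lemma optWeight_le_max {α β : Type*} (A : Finset α) (B : Finset β) (w : α → β → ℝ)
    (hw : ∀ a ∈ A, ∀ b ∈ B, w a b ≤ 1) :
    optWeight A B w ≤ (max A.card B.card : ℝ) := by
  classical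
  apply Finset.sup'_le
  intro M hM
  simp only [Finset.mem_filter, Finset.mem_powerset] at hM
  have hcard : M.card ≤ A.card :=
    Finset.card_le_card_of_injOn Prod.fst (fun p hp => (hM.2.1 p hp).1)
      (fun p hp q hq h => hM.2.2.1 p hp q hq h)
  calc ∑ p ∈ M, w p.1 p.2 ≤ ∑ _p ∈ M, (1 : ℝ) :=
        Finset.sum_le_sum fun p hp => hw p.1 (hM.2.1 p hp).1 p.2 (hM.2.1 p hp).2
    _ = M.card := by simp
    _ ≤ (A.card : ℝ) := by exact_mod_cast hcard
    _ ≤ (max A.card B.card : ℝ) := by exact_mod_cast le_max_left _ _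

lemma sIn_le_one {α β : Type*} (VA : Finset α) (EA : Finset (α × α))
    (VB : Finset β) (EB : Finset (β × β)) (x : α → β → ℝ)
    (hx : ∀ a ∈ VA, ∀ b ∈ VB, x a b ≤ 1) (i : α) (j : β) :
    sIn VA EA VB EB x i j ≤ 1 := by
  classical
  unfold sIn
  split
  · exact le_refl 1
  · next h =>
    rw [div_le_one (by exact_mod_cast Nat.pos_of_ne_zero h)]
    exact optWeight_le_max _ _ _ fun a ha b hb =>
      hx a (Finset.mem_filter.mp ha).1 b (Finset.mem_filter.mp hb).1

lemma sOut_le_one {α β : Type*} (VA : Finset α) (EA : Finset (α × α))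
    (VB : Finset β) (EB : Finset (β × β)) (x : α → β → ℝ)
    (hx : ∀ a ∈ VA, ∀ b ∈ VB, x a b ≤ 1) (i : α) (j : β) :
    sOut VA EA VB EB x i j ≤ 1 := by
  classical
  unfold sOut
  split
  · exact le_refl 1
  · next h =>
    rw [div_le_one (by exact_mod_cast Nat.pos_of_ne_zero h)]
    exact optWeight_le_max _ _ _ fun a ha b hb =>
      hx a (Finset.mem_filter.mp ha).1 b (Finset.mem_filter.mp hb).1

lemma sIn_mono {α β : Type*} (VA : Finset α) (EA : Finset (α × α))
    (VB : Finset β) (EB : Finset (β × β)) (x x' : α → β → ℝ)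
    (hx : ∀ a ∈ VA, ∀ b ∈ VB, x a b ≤ x' a b) (i : α) (j : β) :
    sIn VA EA VB EB x i j ≤ sIn VA EA VB EB x' i j := by
  classical
  unfold sIn
  split
  · exact le_refl 1
  · next h =>
    apply div_le_div_of_nonneg_right ?_ (le_max_of_le_left (Nat.cast_nonneg _))
    exact optWeight_mono' _ _ _ _ fun a ha b hb =>
      hx a (Finset.mem_filter.mp ha).1 b (Finset.mem_filter.mp hb).1

lemma sOut_mono {α β : Type*} (VA : Finset α) (EA : Finset (α × α))
    (VB : Finset β) (EB : Finset (β × β)) (x x' : α → β → ℝ)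
    (hx : ∀ a ∈ VA, ∀ b ∈ VB, x a b ≤ x' a b) (i : α) (j : β) :
    sOut VA EA VB EB x i j ≤ sOut VA EA VB EB x' i j := by
  classical
  unfold sOut
  split
  · exact le_refl 1
  · next h =>
    apply div_le_div_of_nonneg_right ?_ (le_max_of_le_left (Nat.cast_nonneg _))
    exact optWeight_mono' _ _ _ _ fun a ha b hb =>
      hx a (Finset.mem_filter.mp ha).1 b (Finset.mem_filter.mp hb).1

/-- Each entry of the neighbor matching iteration is nonincreasing in `k`:
`x^{k+1}_{ij} ≤ x^k_{ij}` for all `k ≥ 0`, `i ∈ V_A`, `j ∈ V_B`. -/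
theorem nmIter_antitone {α β : Type*} (VA : Finset α) (EA : Finset (α × α))
    (VB : Finset β) (EB : Finset (β × β))
    (hEA : EA ⊆ VA ×ˢ VA) (hEB : EB ⊆ VB ×ˢ VB) :
    ∀ k : ℕ, ∀ i ∈ VA, ∀ j ∈ VB,
      nmIter VA EA VB EB (k + 1) i j ≤ nmIter VA EA VB EB k i j := by
  intro k
  induction k with
  | zero =>
    intro i _ j _
    show nmUpdate VA EA VB EB (nmIter VA EA VB EB 0) i j ≤ 1
    have h1 : sIn VA EA VB EB (nmIter VA EA VB EB 0) i j ≤ 1 :=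
      sIn_le_one _ _ _ _ _ (fun _ _ _ _ => le_refl 1) i j
    have h2 : sOut VA EA VB EB (nmIter VA EA VB EB 0) i j ≤ 1 :=
      sOut_le_one _ _ _ _ _ (fun _ _ _ _ => le_refl 1) i j
    unfold nmUpdate
    linarith
  | succ k ih =>
    intro i _ j _
    show nmUpdate VA EA VB EB (nmIter VA EA VB EB (k + 1)) i j ≤
      nmUpdate VA EA VB EB (nmIter VA EA VB EB k) i j
    have h1 := sIn_mono VA EA VB EB _ _ (fun a ha b hb => ih a ha b hb) i j
    have h2 := sOut_mono VA EA VB EB _ _ (fun a ha b hb => ih a ha b hb) i j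
    unfold nmUpdate
    linarith
end

section
/- (Theorem 2) Let G_A = (V_A, E_A) and G_B = (V_B, E_B) be finite directed graphs and let f : V_A → V_B be an isomorphism between them. Then for each node i ∈ V_A, the limit similarity score of the neighbor matching iteration satisfies x_{i f(i)} = lim_{k→∞} x^k_{i f(i)} = 1. -/
open Finset Filter Topology

section AuxNM

variable {α β : Type*}

open Classical in
lemma optWeight_nonneg (A : Finset α) (B : Finset β) (w : α → β → ℝ) :
    0 ≤ optWeight A B w := by
  have h : (∅ : Finset (α × β)) ∈
      ((A ×ˢ B).powerset.filter fun M => IsMatching A B M) := by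
    simp [IsMatching]
  unfold optWeight
  exact le_trans (by simp) (Finset.le_sup' _ h)

open Classical in
lemma optWeight_le_card (A : Finset α) (B : Finset β) (w : α → β → ℝ)
    (hw : ∀ a ∈ A, ∀ b ∈ B, w a b ≤ 1) :
    optWeight A B w ≤ A.card := by
  apply Finset.sup'_le
  intro M hM
  simp only [Finset.mem_filter, Finset.mem_powerset] at hM
  simp only [IsMatching] at hM
  obtain ⟨hMsub, hM1, hM2, hM3⟩ := hM
  calc ∑ p ∈ M, w p.1 p.2 ≤ ∑ p ∈ M, 1 :=
        Finset.sum_le_sum fun p hp => hw p.1 (hM1 p hp).1 p.2 (hM1 p hp).2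
    _ = M.card := by simp
    _ ≤ (A.card : ℝ) := by
        exact_mod_cast Finset.card_le_card_of_injOn (fun p => p.1)
          (fun p hp => (hM1 p hp).1) (fun p hp q hq h => hM2 p hp q hq h)

open Classical in
lemma optWeight_ge_card (A : Finset α) (B : Finset β) (g : α → β) (w : α → β → ℝ)
    (hg : Set.InjOn g ↑A) (hgB : ∀ a ∈ A, g a ∈ B) (hw : ∀ a ∈ A, w a (g a) = 1) :
    (A.card : ℝ) ≤ optWeight A B w := by
  have hinj : ∀ a ∈ A, ∀ b ∈ A, (a, g a) = (b, g b) → a = b :=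
    fun a _ b _ h => congrArg Prod.fst h
  have hmem : A.image (fun a => (a, g a)) ∈
      ((A ×ˢ B).powerset.filter fun M => IsMatching A B M) := by
    simp only [Finset.mem_filter, Finset.mem_powerset]
    simp only [IsMatching]
    refine ⟨?_, ?_, ?_, ?_⟩
    · intro p hp
      simp only [Finset.mem_image] at hp
      obtain ⟨a, ha, rfl⟩ := hp
      exact Finset.mk_mem_product ha (hgB a ha)
    · intro p hp
      simp only [Finset.mem_image] at hp
      obtain ⟨a, ha, rfl⟩ := hp
      exact ⟨ha, hgB a ha⟩
    · intro p hp q hq h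
      simp only [Finset.mem_image] at hp hq
      obtain ⟨a, ha, rfl⟩ := hp
      obtain ⟨b, hb, rfl⟩ := hq
      simp only at h
      subst h; rfl
    · intro p hp q hq h
      simp only [Finset.mem_image] at hp hq
      obtain ⟨a, ha, rfl⟩ := hp
      obtain ⟨b, hb, rfl⟩ := hq
      simp only at h
      have := hg (Finset.mem_coe.mpr ha) (Finset.mem_coe.mpr hb) h
      subst this; rfl
  unfold optWeight
  refine le_trans (le_of_eq ?_) (Finset.le_sup' _ hmem)
  rw [Finset.sum_image hinj]
  rw [Finset.sum_congr rfl (fun a ha => hw a ha)]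
  simp

lemma sIn_mem_Icc (VA : Finset α) (EA : Finset (α × α)) (VB : Finset β)
    (EB : Finset (β × β)) (x : α → β → ℝ) (hx : ∀ a b, x a b ≤ 1) (i : α) (j : β) :
    sIn VA EA VB EB x i j ∈ Set.Icc (0:ℝ) 1 := by
  unfold sIn
  split
  · norm_num
  · rename_i h
    have hpos : 0 < max (inNbrs VA EA i).card (inNbrs VB EB j).card :=
      Nat.pos_of_ne_zero h
    have hposR : (0:ℝ) < max ((inNbrs VA EA i).card : ℝ) ((inNbrs VB EB j).card : ℝ) := by
      rw [← Nat.cast_max]; exact_mod_cast hpos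
    constructor
    · exact div_nonneg (optWeight_nonneg _ _ _) hposR.le
    · rw [div_le_one hposR]
      calc optWeight (inNbrs VA EA i) (inNbrs VB EB j) x
          ≤ ((inNbrs VA EA i).card : ℝ) :=
            optWeight_le_card _ _ _ (fun a _ b _ => hx a b)
        _ ≤ _ := le_max_left _ _

lemma sOut_mem_Icc (VA : Finset α) (EA : Finset (α × α)) (VB : Finset β)
    (EB : Finset (β × β)) (x : α → β → ℝ) (hx : ∀ a b, x a b ≤ 1) (i : α) (j : β) :
    sOut VA EA VB EB x i j ∈ Set.Icc (0:ℝ) 1 := by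
  unfold sOut
  split
  · norm_num
  · rename_i h
    have hpos : 0 < max (outNbrs VA EA i).card (outNbrs VB EB j).card :=
      Nat.pos_of_ne_zero h
    have hposR : (0:ℝ) < max ((outNbrs VA EA i).card : ℝ) ((outNbrs VB EB j).card : ℝ) := by
      rw [← Nat.cast_max]; exact_mod_cast hpos
    constructor
    · exact div_nonneg (optWeight_nonneg _ _ _) hposR.le
    · rw [div_le_one hposR]
      calc optWeight (outNbrs VA EA i) (outNbrs VB EB j) x
          ≤ ((outNbrs VA EA i).card : ℝ) :=
            optWeight_le_card _ _ _ (fun a _ b _ => hx a b)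
        _ ≤ _ := le_max_left _ _

lemma sIn_iso_eq_one (VA : Finset α) (EA : Finset (α × α)) (VB : Finset β)
    (EB : Finset (β × β)) (x : α → β → ℝ) (f : α → β) (i : α)
    (hcard : (inNbrs VB EB (f i)).card = (inNbrs VA EA i).card)
    (hmaps : ∀ p ∈ inNbrs VA EA i, f p ∈ inNbrs VB EB (f i))
    (hinj : Set.InjOn f ↑(inNbrs VA EA i))
    (hx1 : ∀ a b, x a b ≤ 1)
    (hxf : ∀ p ∈ inNbrs VA EA i, x p (f p) = 1) :
    sIn VA EA VB EB x i (f i) = 1 := by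
  unfold sIn
  rw [hcard]
  simp only [max_self]
  by_cases h0 : (inNbrs VA EA i).card = 0
  · simp [h0]
  · rw [if_neg h0]
    have heq : optWeight (inNbrs VA EA i) (inNbrs VB EB (f i)) x
        = ((inNbrs VA EA i).card : ℝ) := by
      apply le_antisymm
      · exact optWeight_le_card _ _ _ (fun a _ b _ => hx1 a b)
      · exact optWeight_ge_card _ _ f x hinj hmaps hxf
    rw [heq, div_self (Nat.cast_ne_zero.mpr h0)]

lemma sOut_iso_eq_one (VA : Finset α) (EA : Finset (α × α)) (VB : Finset β)
    (EB : Finset (β × β)) (x : α → β → ℝ) (f : α → β) (i : α)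
    (hcard : (outNbrs VB EB (f i)).card = (outNbrs VA EA i).card)
    (hmaps : ∀ p ∈ outNbrs VA EA i, f p ∈ outNbrs VB EB (f i))
    (hinj : Set.InjOn f ↑(outNbrs VA EA i))
    (hx1 : ∀ a b, x a b ≤ 1)
    (hxf : ∀ p ∈ outNbrs VA EA i, x p (f p) = 1) :
    sOut VA EA VB EB x i (f i) = 1 := by
  unfold sOut
  rw [hcard]
  simp only [max_self]
  by_cases h0 : (outNbrs VA EA i).card = 0
  · simp [h0]
  · rw [if_neg h0]
    have heq : optWeight (outNbrs VA EA i) (outNbrs VB EB (f i)) x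
        = ((outNbrs VA EA i).card : ℝ) := by
      apply le_antisymm
      · exact optWeight_le_card _ _ _ (fun a _ b _ => hx1 a b)
      · exact optWeight_ge_card _ _ f x hinj hmaps hxf
    rw [heq, div_self (Nat.cast_ne_zero.mpr h0)]

end AuxNM

/-- (Theorem 2) If `f : V_A → V_B` is an isomorphism of the directed graphs
`G_A` and `G_B`, then for each node `i ∈ V_A` the limit similarity score of the
neighbor matching iteration satisfies `x_{i f(i)} = lim_{k→∞} x^k_{i f(i)} = 1`. -/
theorem nmIter_isomorphism_limit {α β : Type*} (VA : Finset α) (EA : Finset (α × α))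
    (VB : Finset β) (EB : Finset (β × β))
    (hEA : EA ⊆ VA ×ˢ VA) (hEB : EB ⊆ VB ×ˢ VB)
    (f : α → β) (hbij : Set.BijOn f ↑VA ↑VB)
    (hiso : ∀ i ∈ VA, ∀ j ∈ VA, ((i, j) ∈ EA ↔ (f i, f j) ∈ EB)) :
    ∀ i ∈ VA,
      Tendsto (fun k => nmIter VA EA VB EB k i (f i)) atTop (𝓝 1) := by
  classical
  have hInsub : ∀ i : α, inNbrs VA EA i ⊆ VA := fun i => Finset.filter_subset _ _
  have hOutsub : ∀ i : α, outNbrs VA EA i ⊆ VA := fun i => Finset.filter_subset _ _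
  have hIn : ∀ i ∈ VA, inNbrs VB EB (f i) = (inNbrs VA EA i).image f := by
    intro i hi
    ext q
    simp only [inNbrs, Finset.mem_filter, Finset.mem_image]
    constructor
    · rintro ⟨hqB, hqE⟩
      obtain ⟨p, hp, rfl⟩ := hbij.surjOn (Finset.mem_coe.mpr hqB)
      exact ⟨p, ⟨hp, (hiso p hp i hi).mpr hqE⟩, rfl⟩
    · rintro ⟨p, ⟨hpA, hpE⟩, rfl⟩
      exact ⟨hbij.mapsTo hpA, (hiso p hpA i hi).mp hpE⟩
  have hOut : ∀ i ∈ VA, outNbrs VB EB (f i) = (outNbrs VA EA i).image f := by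
    intro i hi
    ext q
    simp only [outNbrs, Finset.mem_filter, Finset.mem_image]
    constructor
    · rintro ⟨hqB, hqE⟩
      obtain ⟨p, hp, rfl⟩ := hbij.surjOn (Finset.mem_coe.mpr hqB)
      exact ⟨p, ⟨hp, (hiso i hi p hp).mpr hqE⟩, rfl⟩
    · rintro ⟨p, ⟨hpA, hpE⟩, rfl⟩
      exact ⟨hbij.mapsTo hpA, (hiso i hi p hpA).mp hpE⟩
  have key : ∀ k, (∀ a b, nmIter VA EA VB EB k a b ≤ 1) ∧
      (∀ i ∈ VA, nmIter VA EA VB EB k i (f i) = 1) := by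
    intro k
    induction k with
    | zero => simp [nmIter]
    | succ k ih =>
      obtain ⟨h1, h2⟩ := ih
      constructor
      · intro a b
        have hin := sIn_mem_Icc VA EA VB EB _ h1 a b
        have hout := sOut_mem_Icc VA EA VB EB _ h1 a b
        show (sIn VA EA VB EB (nmIter VA EA VB EB k) a b +
          sOut VA EA VB EB (nmIter VA EA VB EB k) a b) / 2 ≤ 1
        have := hin.2
        have := hout.2
        linarith
      · intro i hi
        have hInjIn : Set.InjOn f ↑(inNbrs VA EA i) :=
          hbij.injOn.mono (by exact_mod_cast hInsub i)
        have hInjOut : Set.InjOn f ↑(outNbrs VA EA i) :=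
          hbij.injOn.mono (by exact_mod_cast hOutsub i)
        have hcIn : (inNbrs VB EB (f i)).card = (inNbrs VA EA i).card := by
          rw [hIn i hi, Finset.card_image_of_injOn hInjIn]
        have hcOut : (outNbrs VB EB (f i)).card = (outNbrs VA EA i).card := by
          rw [hOut i hi, Finset.card_image_of_injOn hInjOut]
        have hmIn : ∀ p ∈ inNbrs VA EA i, f p ∈ inNbrs VB EB (f i) := by
          intro p hp; rw [hIn i hi]; exact Finset.mem_image_of_mem f hp
        have hmOut : ∀ p ∈ outNbrs VA EA i, f p ∈ outNbrs VB EB (f i) := by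
          intro p hp; rw [hOut i hi]; exact Finset.mem_image_of_mem f hp
        have hsin := sIn_iso_eq_one VA EA VB EB (nmIter VA EA VB EB k) f i
          hcIn hmIn hInjIn h1 (fun p hp => h2 p (hInsub i hp))
        have hsout := sOut_iso_eq_one VA EA VB EB (nmIter VA EA VB EB k) f i
          hcOut hmOut hInjOut h1 (fun p hp => h2 p (hOutsub i hp))
        show (sIn VA EA VB EB (nmIter VA EA VB EB k) i (f i) +
          sOut VA EA VB EB (nmIter VA EA VB EB k) i (f i)) / 2 = 1
        rw [hsin, hsout]; norm_num
  intro i hi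
  have hconst : ∀ k, nmIter VA EA VB EB k i (f i) = 1 := fun k => (key k).2 i hi
  simp only [hconst]
  exact tendsto_const_nhds
end
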